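/- For any positive integer n, χ_ld(F_n + B_{n,n}) = 2n + 5, where F_n is the friendship graph and B_{n,n} is the bistar. -/

import Mathlib

open Finset

open Classical in
/-- The weight of a vertex: sum of labels of its neighbors. -/
noncomputable def ldWeight {V : Type*} (G : SimpleGraph V) [Fintype V] (f : V → ℕ) (v : V) : ℕ :=
  ∑ x ∈ Finset.univ, if G.Adj v x then f x else 0

/-- `f` is a local distance antimagic labeling of `G`: a bijection onto `{1,…,|V|}`
with adjacent vertices getting distinct weights. -/
def IsLDAL {V : Type*} (G : SimpleGraph V) [Fintype V] (f : V → ℕ) : Prop :=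
  Set.BijOn f Set.univ (Set.Icc 1 (Fintype.card V)) ∧
    ∀ ⦃u v : V⦄, G.Adj u v → ldWeight G f u ≠ ldWeight G f v

/-- The local distance antimagic chromatic number: minimum number of distinct weights. -/
noncomputable def chiLD {V : Type*} (G : SimpleGraph V) [Fintype V] : ℕ :=
  sInf {k | ∃ f : V → ℕ, IsLDAL G f ∧ (Finset.univ.image (ldWeight G f)).card = k}

/-- The join `G + H` of two graphs. -/
def graphJoin {α β : Type*} (G : SimpleGraph α) (H : SimpleGraph β) :
    SimpleGraph (α ⊕ β) where
  Adj x y :=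
    match x, y with
    | Sum.inl a, Sum.inl b => G.Adj a b
    | Sum.inr a, Sum.inr b => H.Adj a b
    | Sum.inl _, Sum.inr _ => True
    | Sum.inr _, Sum.inl _ => True
  symm := by
    constructor
    rintro (a | a) (b | b) h
    exacts [G.adj_symm h, trivial, trivial, H.adj_symm h]
  loopless := by
    constructor
    rintro (a | a) h
    exacts [G.irrefl h, H.irrefl h]

/-- The lexicographic product `G[H]`. -/
def lexProd {α β : Type*} (G : SimpleGraph α) (H : SimpleGraph β) :
    SimpleGraph (α × β) where
  Adj x y := G.Adj x.1 y.1 ∨ (x.1 = y.1 ∧ H.Adj x.2 y.2)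
  symm := by
    constructor
    rintro x y (h | ⟨e, h⟩)
    exacts [Or.inl h.symm, Or.inr ⟨e.symm, h.symm⟩]
  loopless := by
    constructor
    rintro x (h | ⟨e, h⟩)
    exacts [G.irrefl h, H.irrefl h]

/-- The friendship graph `F_n`: `n` triangles sharing the central vertex `none`. -/
def friendship (n : ℕ) : SimpleGraph (Option (Fin n × Fin 2)) where
  Adj x y := x ≠ y ∧ (x = none ∨ y = none ∨ ∃ i a b, x = some (i, a) ∧ y = some (i, b))
  symm := by
    constructor
    rintro x y ⟨hne, h⟩
    refine ⟨hne.symm, ?_⟩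
    rcases h with h | h | ⟨i, a, b, hx, hy⟩
    · exact Or.inr (Or.inl h)
    · exact Or.inl h
    · exact Or.inr (Or.inr ⟨i, b, a, hy, hx⟩)
  loopless := ⟨fun x h => h.1 rfl⟩

/-- The bistar `B_{n,n}`: two adjacent centers, each with `n` leaves. -/
def bistar (n : ℕ) : SimpleGraph (Bool ⊕ Bool × Fin n) where
  Adj x y :=
    match x, y with
    | Sum.inl a, Sum.inl b => a ≠ b
    | Sum.inl a, Sum.inr (c, _) => a = c
    | Sum.inr (c, _), Sum.inl a => a = c
    | Sum.inr _, Sum.inr _ => False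
  symm := by
    constructor
    rintro (a | ⟨c, i⟩) (b | ⟨d, j⟩) h
    exacts [h.symm, h, h, h.elim]
  loopless := by
    constructor
    rintro (a | ⟨c, i⟩) h
    exacts [h rfl, h]

/-! In the join every vertex of `F_n` is adjacent to every vertex of `B_{n,n}`, so for a local
distance antimagic labeling the weights on the two sides are disjoint, and on each side they are
the weights inside that graph shifted by the label sum of the other side. Inside `F_n` the weights
are pairwise distinct: a leaf's weight is the centre label plus its partner's label, and the centre
is adjacent to everything. Inside `B_{n,n}` all leaves at one centre carry the label of that centre
as weight, so there are at most four weights, and they differ because the centres are adjacent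
to each other and to their own leaves, while a centre outweighs the other centre's label. Hence every such labeling has exactly `2n + 5`
weights, and it remains to exhibit one labeling. -/

open Function Sum

open Classical in
theorem ldWeight_pos {V : Type*} [Fintype V] {G : SimpleGraph V} {f : V → ℕ} {v x : V}
    (hvx : G.Adj v x) (hx : 0 < f x) : 0 < ldWeight G f v := by
  have hle := single_le_sum (f := fun y => if G.Adj v y then f y else 0)
    (fun _ _ => Nat.zero_le _) (mem_univ x)
  rw [if_pos hvx] at hle
  exact hx.trans_le hle

theorem bijOn_Icc_of_injective {V : Type*} [Fintype V] {f : V → ℕ} (hf : Injective f)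
    (hmaps : ∀ v, f v ∈ Set.Icc 1 (Fintype.card V)) :
    Set.BijOn f Set.univ (Set.Icc 1 (Fintype.card V)) := by
  have himage : univ.image f = Finset.Icc 1 (Fintype.card V) :=
    eq_of_subset_of_card_le
      (fun y hy => by obtain ⟨v, -, rfl⟩ := mem_image.1 hy; simpa using hmaps v)
      (by simp [card_image_of_injective _ hf])
  simpa using (image_eq_iff_bijOn_of_card (by simp)).1 himage

section Join

variable {α β : Type*} {G : SimpleGraph α} {H : SimpleGraph β}

@[simp] theorem graphJoin_adj_inl_inl {a a' : α} :
    (graphJoin G H).Adj (inl a) (inl a') ↔ G.Adj a a' := Iff.rfl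

@[simp] theorem graphJoin_adj_inr_inr {b b' : β} :
    (graphJoin G H).Adj (inr b) (inr b') ↔ H.Adj b b' := Iff.rfl

@[simp] theorem graphJoin_adj_inl_inr {a : α} {b : β} : (graphJoin G H).Adj (inl a) (inr b) :=
  trivial

@[simp] theorem graphJoin_adj_inr_inl {a : α} {b : β} : (graphJoin G H).Adj (inr b) (inl a) :=
  trivial

variable [Fintype α] [Fintype β] {f : α ⊕ β → ℕ}

theorem ldWeight_graphJoin_inl (f : α ⊕ β → ℕ) (a : α) :
    ldWeight (graphJoin G H) f (inl a) = ldWeight G (f ∘ inl) a + ∑ b, f (inr b) := by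
  rw [ldWeight, ldWeight, Fintype.sum_sum_type]
  simp only [graphJoin_adj_inl_inr, if_true]
  rfl

theorem ldWeight_graphJoin_inr (f : α ⊕ β → ℕ) (b : β) :
    ldWeight (graphJoin G H) f (inr b) = ∑ a, f (inl a) + ldWeight H (f ∘ inr) b := by
  rw [ldWeight, ldWeight, Fintype.sum_sum_type]
  simp only [graphJoin_adj_inr_inl, if_true]
  rfl

theorem card_image_ldWeight_graphJoin
    (hcross : ∀ a b, ldWeight (graphJoin G H) f (inl a) ≠ ldWeight (graphJoin G H) f (inr b)) :
    #(univ.image (ldWeight (graphJoin G H) f)) =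
      #(univ.image (ldWeight G (f ∘ inl))) + #(univ.image (ldWeight H (f ∘ inr))) := by
  have hsplit : univ.image (ldWeight (graphJoin G H) f) =
      (univ.image (ldWeight G (f ∘ inl))).image (· + ∑ b, f (inr b)) ∪
        (univ.image (ldWeight H (f ∘ inr))).image (∑ a, f (inl a) + ·) := by
    ext w
    simp [Sum.exists, ldWeight_graphJoin_inl, ldWeight_graphJoin_inr]
  rw [hsplit, card_union_of_disjoint, card_image_of_injective _ (add_left_injective _),
    card_image_of_injective _ (add_right_injective _)]
  simp only [disjoint_left, image_image, mem_image, mem_univ, true_and, not_exists]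
  rintro _ ⟨a, rfl⟩ b hb
  exact hcross a b (by simpa [ldWeight_graphJoin_inl, ldWeight_graphJoin_inr] using hb.symm)

theorem ldWeight_comp_inl_ne_of_adj
    (hf : ∀ ⦃u v⦄, (graphJoin G H).Adj u v →
      ldWeight (graphJoin G H) f u ≠ ldWeight (graphJoin G H) f v)
    {a a' : α} (h : G.Adj a a') :
    ldWeight G (f ∘ inl) a ≠ ldWeight G (f ∘ inl) a' := fun heq =>
  hf (graphJoin_adj_inl_inl.2 h) (by rw [ldWeight_graphJoin_inl, ldWeight_graphJoin_inl, heq])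

theorem ldWeight_comp_inr_ne_of_adj
    (hf : ∀ ⦃u v⦄, (graphJoin G H).Adj u v →
      ldWeight (graphJoin G H) f u ≠ ldWeight (graphJoin G H) f v)
    {b b' : β} (h : H.Adj b b') :
    ldWeight H (f ∘ inr) b ≠ ldWeight H (f ∘ inr) b' := fun heq =>
  hf (graphJoin_adj_inr_inr.2 h) (by rw [ldWeight_graphJoin_inr, ldWeight_graphJoin_inr, heq])

end Join

section Friendship

variable {n : ℕ}

theorem fin_two_ne_iff_eq_rev {j l : Fin 2} : l ≠ j ↔ l = j.rev := by
  revert j l; decide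

@[simp] theorem friendship_adj_none_none : ¬ (friendship n).Adj none none :=
  (friendship n).loopless.irrefl _

@[simp] theorem friendship_adj_none_some {p : Fin n × Fin 2} : (friendship n).Adj none (some p) :=
  ⟨by simp, Or.inl rfl⟩

@[simp] theorem friendship_adj_some_none {p : Fin n × Fin 2} : (friendship n).Adj (some p) none :=
  friendship_adj_none_some.symm

@[simp] theorem friendship_adj_some_some {p q : Fin n × Fin 2} :
    (friendship n).Adj (some p) (some q) ↔ q = (p.1, p.2.rev) := by
  obtain ⟨i, j⟩ := p
  obtain ⟨k, l⟩ := q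
  simp only [friendship, ne_eq, Option.some.injEq, reduceCtorEq, false_or, Prod.mk.injEq]
  constructor
  · rintro ⟨hne, i', a, b, ⟨rfl, rfl⟩, rfl, rfl⟩
    exact ⟨rfl, fin_two_ne_iff_eq_rev.1 fun h => hne ⟨rfl, h.symm⟩⟩
  · rintro ⟨rfl, rfl⟩
    exact ⟨fun h => fin_two_ne_iff_eq_rev.2 rfl h.2.symm, k, j, j.rev, ⟨rfl, rfl⟩, rfl, rfl⟩

variable {g : Option (Fin n × Fin 2) → ℕ}

theorem ldWeight_friendship_none (g : Option (Fin n × Fin 2) → ℕ) :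
    ldWeight (friendship n) g none = ∑ p, g (some p) := by
  simp [ldWeight, Fintype.sum_option]

theorem ldWeight_friendship_some (g : Option (Fin n × Fin 2) → ℕ) (p : Fin n × Fin 2) :
    ldWeight (friendship n) g (some p) = g none + g (some (p.1, p.2.rev)) := by
  simp [ldWeight, Fintype.sum_option]

theorem ldWeight_friendship_some_injective (hg : Injective g) :
    Injective fun p => ldWeight (friendship n) g (some p) := by
  rintro ⟨i, j⟩ ⟨k, l⟩ h
  simp only [ldWeight_friendship_some, add_right_inj] at h
  obtain ⟨rfl, hjl⟩ := Prod.ext_iff.1 (Option.some_injective _ (hg h))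
  rw [Fin.rev_injective hjl]

theorem ldWeight_friendship_some_lt_none (hc : ∀ p, g none < g (some p)) (p : Fin n × Fin 2) :
    ldWeight (friendship n) g (some p) < ldWeight (friendship n) g none := by
  set q : Fin n × Fin 2 := (p.1, p.2.rev)
  have hpq : p ≠ q := fun h => fin_two_ne_iff_eq_rev.2 rfl (congrArg Prod.snd h).symm
  rw [ldWeight_friendship_some, ldWeight_friendship_none]
  calc g none + g (some q) < g (some p) + g (some q) := by gcongr; exact hc p
    _ = ∑ r ∈ {p, q}, g (some r) := (sum_pair (f := fun r => g (some r)) hpq).symm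
    _ ≤ ∑ r, g (some r) := sum_le_sum_of_subset (subset_univ _)

theorem ldWeight_friendship_ne_of_adj (hg : Injective g) (hc : ∀ p, g none < g (some p))
    {u v : Option (Fin n × Fin 2)} (h : (friendship n).Adj u v) :
    ldWeight (friendship n) g u ≠ ldWeight (friendship n) g v := by
  rcases u with _ | p <;> rcases v with _ | q
  · exact absurd h friendship_adj_none_none
  · exact (ldWeight_friendship_some_lt_none hc q).ne'
  · exact (ldWeight_friendship_some_lt_none hc p).ne
  · exact fun heq => h.ne (congrArg some (ldWeight_friendship_some_injective hg heq))

theorem card_image_ldWeight_friendship (hg : Injective g)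
    (hadj : ∀ ⦃u v⦄, (friendship n).Adj u v →
      ldWeight (friendship n) g u ≠ ldWeight (friendship n) g v) :
    #(univ.image (ldWeight (friendship n) g)) = 2 * n + 1 := by
  have hinj : Injective (ldWeight (friendship n) g) := by
    rintro (_ | p) (_ | q) h
    · rfl
    · exact absurd h (hadj friendship_adj_none_some)
    · exact absurd h (hadj friendship_adj_some_none)
    · exact congrArg some (ldWeight_friendship_some_injective hg h)
  rw [card_image_of_injective _ hinj]
  simp [mul_comm]

end Friendship

section Bistar

variable {n : ℕ}

@[simp] theorem bistar_adj_inl_inl {c d : Bool} : (bistar n).Adj (inl c) (inl d) ↔ c ≠ d :=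
  Iff.rfl

@[simp] theorem bistar_adj_inl_inr {c d : Bool} {i : Fin n} :
    (bistar n).Adj (inl c) (inr (d, i)) ↔ c = d := Iff.rfl

@[simp] theorem bistar_adj_inr_inl {c d : Bool} {i : Fin n} :
    (bistar n).Adj (inr (d, i)) (inl c) ↔ c = d := Iff.rfl

@[simp] theorem bistar_adj_inr_inr {p q : Bool × Fin n} : ¬ (bistar n).Adj (inr p) (inr q) :=
  id

variable {h : Bool ⊕ Bool × Fin n → ℕ}

theorem ldWeight_bistar_inl (h : Bool ⊕ Bool × Fin n → ℕ) (c : Bool) :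
    ldWeight (bistar n) h (inl c) = h (inl !c) + ∑ i, h (inr (c, i)) := by
  cases c <;> simp [ldWeight, Fintype.sum_sum_type, Fintype.sum_prod_type]

theorem ldWeight_bistar_inr (h : Bool ⊕ Bool × Fin n → ℕ) (c : Bool) (i : Fin n) :
    ldWeight (bistar n) h (inr (c, i)) = h (inl c) := by
  cases c <;> simp [ldWeight, Fintype.sum_sum_type]

theorem ldWeight_bistar_inr_lt_inl (hcl : ∀ c d i, h (inl c) < h (inr (d, i))) (c : Bool)
    (i : Fin n) : ldWeight (bistar n) h (inr (c, i)) < ldWeight (bistar n) h (inl c) := by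
  rw [ldWeight_bistar_inr, ldWeight_bistar_inl]
  calc h (inl c) < h (inr (c, i)) := hcl c c i
    _ ≤ ∑ i, h (inr (c, i)) :=
      single_le_sum (f := fun i => h (inr (c, i))) (fun _ _ => Nat.zero_le _) (mem_univ i)
    _ ≤ _ := Nat.le_add_left _ _

theorem ldWeight_bistar_false_lt_true (hab : h (inl true) < h (inl false))
    (hxy : ∀ i, h (inr (false, i)) ≤ h (inr (true, i))) :
    ldWeight (bistar n) h (inl false) < ldWeight (bistar n) h (inl true) := by
  rw [ldWeight_bistar_inl, ldWeight_bistar_inl]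
  exact add_lt_add_of_lt_of_le hab (sum_le_sum fun i _ => hxy i)

theorem ldWeight_bistar_ne_of_adj (hcl : ∀ c d i, h (inl c) < h (inr (d, i)))
    (hab : h (inl true) < h (inl false)) (hxy : ∀ i, h (inr (false, i)) ≤ h (inr (true, i)))
    {u v : Bool ⊕ Bool × Fin n} (huv : (bistar n).Adj u v) :
    ldWeight (bistar n) h u ≠ ldWeight (bistar n) h v := by
  have hlt := ldWeight_bistar_false_lt_true hab hxy
  rcases u with c | ⟨c, i⟩ <;> rcases v with d | ⟨d, j⟩
  · cases c <;> cases d <;> simp_all [hlt.ne, hlt.ne']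
  · obtain rfl : c = d := huv
    exact (ldWeight_bistar_inr_lt_inl hcl c j).ne'
  · obtain rfl : d = c := huv
    exact (ldWeight_bistar_inr_lt_inl hcl d i).ne
  · exact absurd huv bistar_adj_inr_inr

theorem ldWeight_bistar_add_le_sum
    (hle : ldWeight (bistar n) h (inl false) ≤ ldWeight (bistar n) h (inl true))
    (v : Bool ⊕ Bool × Fin n) :
    ldWeight (bistar n) h v + ldWeight (bistar n) h (inl false) ≤ ∑ x, h x := by
  rw [ldWeight_bistar_inl, ldWeight_bistar_inl] at hle
  rcases v with (_ | _) | ⟨(_ | _), i⟩ <;>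
    simp only [ldWeight_bistar_inl, ldWeight_bistar_inr, Fintype.sum_sum_type,
      Fintype.sum_bool, Fintype.sum_prod_type, Bool.not_false, Bool.not_true] at hle ⊢ <;>
    omega

theorem ldWeight_bistar_inl_ne_inr (hpos : ∀ v, 0 < h v)
    (hadj : ∀ ⦃u v⦄, (bistar n).Adj u v →
      ldWeight (bistar n) h u ≠ ldWeight (bistar n) h v)
    (c d : Bool) (i : Fin n) :
    ldWeight (bistar n) h (inl c) ≠ ldWeight (bistar n) h (inr (d, i)) := by
  obtain rfl | rfl := Bool.eq_or_eq_not d c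
  · exact hadj (bistar_adj_inl_inr.2 rfl)
  · rw [ldWeight_bistar_inr, ldWeight_bistar_inl]
    have hleaf :=
      single_le_sum (f := fun i => h (inr (c, i))) (fun _ _ => Nat.zero_le _) (mem_univ i)
    have hpos_leaf := hpos (inr (c, i))
    omega

theorem card_image_ldWeight_bistar (hn : 0 < n)
    (hh : Injective h) (hpos : ∀ v, 0 < h v)
    (hadj : ∀ ⦃u v⦄, (bistar n).Adj u v →
      ldWeight (bistar n) h u ≠ ldWeight (bistar n) h v) :
    #(univ.image (ldWeight (bistar n) h)) = 4 := by
  let ι : Bool ⊕ Bool → Bool ⊕ Bool × Fin n := Sum.map id (·, ⟨0, hn⟩)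
  have himage : univ.image (ldWeight (bistar n) h) = univ.image (ldWeight (bistar n) h ∘ ι) := by
    refine Subset.antisymm (fun w hw => ?_)
      (by rw [← image_image]; exact image_subset_image (subset_univ _))
    obtain ⟨v, -, rfl⟩ := mem_image.1 hw
    rcases v with c | ⟨c, i⟩
    · exact mem_image_of_mem _ (mem_univ (inl c))
    · refine mem_image.2 ⟨inr c, mem_univ _, ?_⟩
      simp [ι, ldWeight_bistar_inr]
  have hinj : Injective (ldWeight (bistar n) h ∘ ι) := by
    rintro (c | c) (d | d) hcd <;> simp only [comp_apply, ι, Sum.map_inl, Sum.map_inr, id] at hcd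
    · by_contra hne
      exact hadj (bistar_adj_inl_inl.2 fun h => hne (congrArg inl h)) hcd
    · exact absurd hcd (ldWeight_bistar_inl_ne_inr hpos hadj c d _)
    · exact absurd hcd.symm (ldWeight_bistar_inl_ne_inr hpos hadj d c _)
    · rw [ldWeight_bistar_inr, ldWeight_bistar_inr] at hcd
      exact congrArg inr (inl_injective (hh hcd))
  rw [himage, card_image_of_injective _ hinj]
  rfl

end Bistar

theorem card_image_ldWeight_of_isLDAL {n : ℕ} (hn : 0 < n)
    {f : Option (Fin n × Fin 2) ⊕ (Bool ⊕ Bool × Fin n) → ℕ}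
    (hf : IsLDAL (graphJoin (friendship n) (bistar n)) f) :
    #(univ.image (ldWeight (graphJoin (friendship n) (bistar n)) f)) = 2 * n + 5 := by
  obtain ⟨hbij, hadj⟩ := hf
  have hinj : Injective f := Set.injOn_univ.1 hbij.injOn
  rw [card_image_ldWeight_graphJoin fun _ _ => hadj graphJoin_adj_inl_inr,
    card_image_ldWeight_friendship (hinj.comp inl_injective)
      fun _ _ => ldWeight_comp_inl_ne_of_adj hadj,
    card_image_ldWeight_bistar hn (hinj.comp inr_injective)
      (fun v => (hbij.mapsTo (Set.mem_univ (inr v))).1) fun _ _ => ldWeight_comp_inr_ne_of_adj hadj]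

/- `F_n` gets the labels `1, …, 2n+1` with the centre smallest, so the centre outweighs every
leaf. Triangle `i` has leaf label sum `4i + 5 ≤ 2n + 2i + 4`, the label of the bistar leaf
`(false, i)`; summing over `i`, the label sum of `F_n` is at most the weight of the bistar centre
`false`, and this puts every `B_{n,n}`-side weight below every `F_n`-side weight. -/
def friendshipBistarLabel (n : ℕ) : Option (Fin n × Fin 2) ⊕ (Bool ⊕ Bool × Fin n) → ℕ
  | inl none => 1
  | inl (some (i, j)) => 2 * i + j + 2
  | inr (inl false) => 2 * n + 3
  | inr (inl true) => 2 * n + 2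
  | inr (inr (false, i)) => 2 * n + 2 * i + 4
  | inr (inr (true, i)) => 2 * n + 2 * i + 5

section Labeling

variable {n : ℕ}

local notation "ℓ" => friendshipBistarLabel n

theorem friendshipBistarLabel_injective : Injective ℓ := by
  rintro ((_ | ⟨i, j⟩) | (c | ⟨c, i⟩)) ((_ | ⟨k, l⟩) | (d | ⟨d, m⟩)) h <;>
    (try cases c) <;> (try cases d) <;>
    simp only [friendshipBistarLabel] at h <;>
    simp only [inl.injEq, inr.injEq, Option.some.injEq, Prod.mk.injEq, Fin.ext_iff,
      reduceCtorEq, true_and] <;>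
    omega

theorem friendshipBistarLabel_mem_Icc (v : Option (Fin n × Fin 2) ⊕ (Bool ⊕ Bool × Fin n)) :
    ℓ v ∈ Set.Icc 1 (Fintype.card (Option (Fin n × Fin 2) ⊕ (Bool ⊕ Bool × Fin n))) := by
  simp only [Fintype.card_sum, Fintype.card_option, Fintype.card_prod, Fintype.card_fin,
    Fintype.card_bool, Set.mem_Icc]
  rcases v with (_ | ⟨i, j⟩) | ((_ | _) | ⟨(_ | _), i⟩) <;>
    simp only [friendshipBistarLabel] <;> omega

theorem sum_friendshipBistarLabel_inl_le :
    ∑ u, ℓ (inl u) ≤ ldWeight (bistar n) (ℓ ∘ inr) (inl false) := by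
  rw [Fintype.sum_option, Fintype.sum_prod_type, ldWeight_bistar_inl]
  simp only [comp_apply, Fin.sum_univ_two, friendshipBistarLabel, Bool.not_false]
  exact add_le_add (by omega) (sum_le_sum fun i _ => by simp; omega)

theorem isLDAL_friendshipBistarLabel (hn : 0 < n) :
    IsLDAL (graphJoin (friendship n) (bistar n)) ℓ := by
  have hc : ∀ p, (ℓ ∘ inl) none < (ℓ ∘ inl) (some p) := fun p => by
    simp [friendshipBistarLabel]
  have hcl : ∀ c d i, (ℓ ∘ inr) (inl c) < (ℓ ∘ inr) (inr (d, i)) := by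
    rintro (_ | _) (_ | _) i <;> simp only [comp_apply, friendshipBistarLabel] <;> omega
  have hab : (ℓ ∘ inr) (inl true) < (ℓ ∘ inr) (inl false) := by
    simp [friendshipBistarLabel]
  have hxy : ∀ i, (ℓ ∘ inr) (inr (false, i)) ≤ (ℓ ∘ inr) (inr (true, i)) := fun i => by
    simp [friendshipBistarLabel]
  have hcross : ∀ u v, ldWeight (graphJoin (friendship n) (bistar n)) ℓ (inr v) <
      ldWeight (graphJoin (friendship n) (bistar n)) ℓ (inl u) := by
    intro u v
    have hS := sum_friendshipBistarLabel_inl_le (n := n)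
    have hB := ldWeight_bistar_add_le_sum (ldWeight_bistar_false_lt_true hab hxy).le v
    have hF : 0 < ldWeight (friendship n) (ℓ ∘ inl) u := by
      rcases u with _ | p
      · exact ldWeight_pos (friendship_adj_none_some (p := (⟨0, hn⟩, 0)))
          (by simp [friendshipBistarLabel])
      · exact ldWeight_pos friendship_adj_some_none (by simp [friendshipBistarLabel])
    rw [ldWeight_graphJoin_inl, ldWeight_graphJoin_inr]
    simp only [comp_apply] at hB ⊢
    omega
  refine ⟨bijOn_Icc_of_injective friendshipBistarLabel_injective
    friendshipBistarLabel_mem_Icc, ?_⟩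
  rintro (u | v) (u' | v') h
  · rw [ldWeight_graphJoin_inl, ldWeight_graphJoin_inl, Ne, add_left_inj]
    exact ldWeight_friendship_ne_of_adj (friendshipBistarLabel_injective.comp inl_injective) hc h
  · exact (hcross u v').ne'
  · exact (hcross u' v).ne
  · rw [ldWeight_graphJoin_inr, ldWeight_graphJoin_inr, Ne, add_right_inj]
    exact ldWeight_bistar_ne_of_adj hcl hab hxy h

end Labeling

theorem stmt_8 (n : ℕ) (hn : 1 ≤ n) :
    chiLD (graphJoin (friendship n) (bistar n)) = 2 * n + 5 := by
  have hweights : {k | ∃ f, IsLDAL (graphJoin (friendship n) (bistar n)) f ∧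
      #(univ.image (ldWeight (graphJoin (friendship n) (bistar n)) f)) = k} = {2 * n + 5} := by
    ext k
    constructor
    · rintro ⟨f, hf, rfl⟩
      exact card_image_ldWeight_of_isLDAL hn hf
    · rintro rfl
      exact ⟨_, isLDAL_friendshipBistarLabel hn,
        card_image_ldWeight_of_isLDAL hn (isLDAL_friendshipBistarLabel hn)⟩
  rw [chiLD, hweights, csInf_singleton]
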